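/- arXiv:1803.02694 — 2 statements merged into one kernel-verified Lean document; each statement's English description precedes it below -/
import Mathlib

section
/- Let φ be a Schwartz function on ℝ, s ∈ ℝ and 0 < δ < 1. Then for every σ ≥ 0 there exists a constant C = C(φ, σ, s, δ) > 0 such that for all integers n ≥ 1 and all α ∈ ℝ, ‖n^{−δ/2−s} φ(x/n^δ) cos(nx − α)‖_{H^σ} ≤ C n^{σ−s}. -/
open MeasureTheory Filter

/-- The Fourier transform `f̂(ξ) = (2π)^{-1/2} ∫ e^{-iξx} f(x) dx` (unitary convention). -/
noncomputable def fourierHat (f : ℝ → ℂ) (ξ : ℝ) : ℂ :=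
  (Real.sqrt (2 * Real.pi) : ℂ)⁻¹ * ∫ x : ℝ, Complex.exp (-(Complex.I * (ξ : ℂ) * (x : ℂ))) * f x

/-- The `H^s(ℝ)` norm `(∫ (1+ξ²)^s |f̂(ξ)|² dξ)^{1/2}` of a real-valued function. -/
noncomputable def hsNorm (s : ℝ) (f : ℝ → ℝ) : ℝ :=
  (∫ ξ : ℝ, (1 + ξ ^ 2) ^ s * ‖fourierHat (fun x => (f x : ℂ)) ξ‖ ^ 2) ^ (1/2 : ℝ)

/-- Membership in the Sobolev space `H^s(ℝ)`. -/
def memHs (s : ℝ) (f : ℝ → ℝ) : Prop :=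
  MeasureTheory.Integrable
    (fun ξ : ℝ => (1 + ξ ^ 2) ^ s * ‖fourierHat (fun x => (f x : ℂ)) ξ‖ ^ 2)

/-!
The Fourier transform turns `x ↦ φ(x/N) cos(nx - α)` into
`N/2 · (e^{-iα} φ̂(N(ξ - n)) + e^{iα} φ̂(N(ξ + n)))`: two copies of `φ̂`, centred at `±n` and
compressed by `N`. The Sobolev weight satisfies `1 + ξ² ≤ 3n² (1 + N²(ξ ∓ n)²)`, so the
change of variables `η = N(ξ ∓ n)` gives `‖φ(·/N) cos(n · - α)‖²_{H^σ} ≤ (3n²)^σ N ‖φ‖²_{H^σ}`.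
With `N = n^δ`, the prefactor `n^{-δ/2-s}` turns this into `3^σ n^{2(σ-s)} ‖φ‖²_{H^σ}`, and
`‖φ‖_{H^σ}` is finite because Schwartz functions lie in every `H^σ`.
-/

open scoped FourierTransform SchwartzMap

theorem fourierHat_eq_fourier (f : ℝ → ℂ) (ξ : ℝ) :
    fourierHat f ξ = (Real.sqrt (2 * Real.pi) : ℂ)⁻¹ * 𝓕 f (ξ / (2 * Real.pi)) := by
  rw [fourierHat, Real.fourier_real_eq_integral_exp_smul]
  congr 2 with x
  rw [smul_eq_mul]
  congr 2
  push_cast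
  field_simp

theorem fourierHat_const_mul (f : ℝ → ℂ) (c : ℂ) (ξ : ℝ) :
    fourierHat (fun x => c * f x) ξ = c * fourierHat f ξ := by
  simp only [fourierHat, mul_left_comm _ c, integral_const_mul]

theorem fourierHat_comp_div (f : ℝ → ℂ) {N : ℝ} (hN : 0 < N) (ξ : ℝ) :
    fourierHat (fun x => f (x / N)) ξ = N * fourierHat f (N * ξ) := by
  have h := Measure.integral_comp_div
    (fun y : ℝ => Complex.exp (-(Complex.I * ((N * ξ : ℝ) : ℂ) * (y : ℂ))) * f y) N
  simp only [abs_of_pos hN, Complex.real_smul] at h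
  simp only [fourierHat, mul_left_comm (N : ℂ), ← h]
  congr 2 with x
  congr 3
  push_cast
  field_simp [Complex.ofReal_ne_zero.2 hN.ne']

theorem fourierHat_exp_mul (f : ℝ → ℂ) (a ξ : ℝ) :
    fourierHat (fun x => Complex.exp (a * x * Complex.I) * f x) ξ = fourierHat f (ξ - a) := by
  simp only [fourierHat, ← mul_assoc, ← Complex.exp_add]
  congr 3 with x
  push_cast
  ring_nf

theorem integrable_exp_mul_I_mul {f : ℝ → ℂ} (hf : Integrable f) (a : ℝ) :
    Integrable (fun x : ℝ => Complex.exp (a * x * Complex.I) * f x) := by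
  refine hf.bdd_mul (c := 1) (by fun_prop) (ae_of_all _ fun x => ?_)
  rw [← Complex.ofReal_mul, Complex.norm_exp_ofReal_mul_I]

theorem fourierHat_add {f g : ℝ → ℂ} (hf : Integrable f) (hg : Integrable g) (ξ : ℝ) :
    fourierHat (fun x => f x + g x) ξ = fourierHat f ξ + fourierHat g ξ := by
  have kernel : ∀ x : ℝ, -(Complex.I * ξ * x) = (-ξ : ℝ) * x * Complex.I := fun x => by
    push_cast; ring
  simp only [fourierHat, kernel, mul_add]
  rw [integral_add (integrable_exp_mul_I_mul hf _) (integrable_exp_mul_I_mul hg _), mul_add]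

theorem fourierHat_mul_cos {f : ℝ → ℂ} (hf : Integrable f) (n α ξ : ℝ) :
    fourierHat (fun x => f x * Real.cos (n * x - α)) ξ =
      (Complex.exp (-α * Complex.I) * fourierHat f (ξ - n) +
        Complex.exp (α * Complex.I) * fourierHat f (ξ + n)) / 2 := by
  have euler : ∀ x : ℝ, f x * Real.cos (n * x - α) =
      Complex.exp (-α * Complex.I) / 2 * (Complex.exp (n * x * Complex.I) * f x) +
        Complex.exp (α * Complex.I) / 2 * (Complex.exp ((-n : ℝ) * x * Complex.I) * f x) :=
    fun x => by
      have e₁ : Complex.exp ((n * x - α : ℝ) * Complex.I) =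
          Complex.exp (-α * Complex.I) * Complex.exp (n * x * Complex.I) := by
        rw [← Complex.exp_add]; congr 1; push_cast; ring
      have e₂ : Complex.exp (-(n * x - α : ℝ) * Complex.I) =
          Complex.exp (α * Complex.I) * Complex.exp ((-n : ℝ) * x * Complex.I) := by
        rw [← Complex.exp_add]; congr 1; push_cast; ring
      rw [Complex.ofReal_cos, Complex.cos, e₁, e₂]
      ring
  simp only [euler]
  rw [fourierHat_add ((integrable_exp_mul_I_mul hf _).const_mul _)
      ((integrable_exp_mul_I_mul hf _).const_mul _),
    fourierHat_const_mul, fourierHat_const_mul, fourierHat_exp_mul, fourierHat_exp_mul,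
    sub_neg_eq_add]
  ring

theorem norm_fourierHat_comp_div_mul_cos_sq_le {f : ℝ → ℂ} (hf : Integrable f) {N : ℝ}
    (hN : 0 < N) (n α ξ : ℝ) :
    ‖fourierHat (fun x => f (x / N) * Real.cos (n * x - α)) ξ‖ ^ 2 ≤
      N ^ 2 / 2 * (‖fourierHat f (N * (ξ - n))‖ ^ 2 + ‖fourierHat f (N * (ξ + n))‖ ^ 2) := by
  rw [fourierHat_mul_cos (hf.comp_div hN.ne'), fourierHat_comp_div f hN,
    fourierHat_comp_div f hN]
  set a := ‖fourierHat f (N * (ξ - n))‖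
  set b := ‖fourierHat f (N * (ξ + n))‖
  have hnorm : ‖(Complex.exp (-α * Complex.I) * (N * fourierHat f (N * (ξ - n))) +
      Complex.exp (α * Complex.I) * (N * fourierHat f (N * (ξ + n)))) / 2‖ ≤ N / 2 * (a + b) := by
    rw [norm_div, Complex.norm_ofNat, div_le_iff₀ two_pos]
    refine (norm_add_le _ _).trans_eq ?_
    rw [← Complex.ofReal_neg]
    simp only [norm_mul, Complex.norm_exp_ofReal_mul_I, Complex.norm_real, Real.norm_eq_abs,
      abs_of_pos hN]
    ring
  calc _ ≤ (N / 2 * (a + b)) ^ 2 := pow_le_pow_left₀ (norm_nonneg _) hnorm 2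
    _ ≤ N ^ 2 / 2 * (a ^ 2 + b ^ 2) := by nlinarith [sq_nonneg (a - b), sq_nonneg N]

theorem one_add_sq_le_three_mul_sq_mul_one_add_sq {n N ξ v : ℝ} (hn : 1 ≤ n) (hN : 1 ≤ N)
    (hv : |v| ≤ n) : 1 + ξ ^ 2 ≤ 3 * n ^ 2 * (1 + (N * (ξ - v)) ^ 2) := by
  have hv2 : v ^ 2 ≤ n ^ 2 := sq_le_sq' (abs_le.1 hv).1 (abs_le.1 hv).2
  have hN2 : (ξ - v) ^ 2 ≤ (N * (ξ - v)) ^ 2 := by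
    rw [mul_pow]; exact le_mul_of_one_le_left (sq_nonneg _) (one_le_pow₀ hN)
  have hn2 : 1 ≤ n ^ 2 := one_le_pow₀ hn
  nlinarith [sq_nonneg (ξ - 2 * v), mul_le_mul_of_nonneg_right hn2 (sq_nonneg (N * (ξ - v)))]

theorem integral_comp_mul_sub (G : ℝ → ℝ) {N : ℝ} (hN : 0 < N) (v : ℝ) :
    ∫ ξ, G (N * (ξ - v)) = N⁻¹ * ∫ η, G η := by
  rw [integral_sub_right_eq_self (fun ξ => G (N * ξ)) v, Measure.integral_comp_mul_left,
    abs_of_pos (inv_pos.2 hN), smul_eq_mul]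

noncomputable def hsDensity (σ : ℝ) (f : ℝ → ℝ) (ξ : ℝ) : ℝ :=
  (1 + ξ ^ 2) ^ σ * ‖fourierHat (fun x => (f x : ℂ)) ξ‖ ^ 2

section Sobolev

variable {σ : ℝ} {f : ℝ → ℝ}

theorem hsNorm_eq_sqrt_integral (σ : ℝ) (f : ℝ → ℝ) :
    hsNorm σ f = Real.sqrt (∫ ξ, hsDensity σ f ξ) := by
  rw [Real.sqrt_eq_rpow]; rfl

theorem memHs_iff_integrable : memHs σ f ↔ Integrable (hsDensity σ f) := Iff.rfl

theorem hsDensity_nonneg (σ : ℝ) (f : ℝ → ℝ) (ξ : ℝ) : 0 ≤ hsDensity σ f ξ := by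
  unfold hsDensity; positivity

theorem hsNorm_const_mul (σ c : ℝ) (f : ℝ → ℝ) :
    hsNorm σ (fun x => c * f x) = |c| * hsNorm σ f := by
  have hdensity : hsDensity σ (fun x => c * f x) = fun ξ => c ^ 2 * hsDensity σ f ξ := by
    ext ξ
    simp only [hsDensity, Complex.ofReal_mul, fourierHat_const_mul, norm_mul, Complex.norm_real,
      Real.norm_eq_abs, mul_pow, sq_abs]
    ring
  rw [hsNorm_eq_sqrt_integral, hsNorm_eq_sqrt_integral, hdensity, integral_const_mul,
    Real.sqrt_mul (sq_nonneg c), Real.sqrt_sq_eq_abs]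

theorem hsDensity_comp_div_mul_cos_le (hf : Integrable f) (hσ : 0 ≤ σ) {n N : ℝ}
    (hn : 1 ≤ n) (hN : 1 ≤ N) (α ξ : ℝ) :
    hsDensity σ (fun x => f (x / N) * Real.cos (n * x - α)) ξ ≤
      (3 * n ^ 2) ^ σ * (N ^ 2 / 2) *
        (hsDensity σ f (N * (ξ - n)) + hsDensity σ f (N * (ξ + n))) := by
  have weight : ∀ v : ℝ, |v| ≤ n →
      (1 + ξ ^ 2) ^ σ ≤ (3 * n ^ 2) ^ σ * (1 + (N * (ξ - v)) ^ 2) ^ σ := fun v hv => by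
    rw [← Real.mul_rpow (by positivity) (by positivity)]
    exact Real.rpow_le_rpow (by positivity)
      (one_add_sq_le_three_mul_sq_mul_one_add_sq hn hN hv) hσ
  have hsq := norm_fourierHat_comp_div_mul_cos_sq_le hf.ofReal (by linarith : 0 < N) n α ξ
  have hw₁ := weight n (by rw [abs_of_nonneg (by linarith)])
  have hw₂ := weight (-n) (by rw [abs_neg, abs_of_nonneg (by linarith)])
  rw [sub_neg_eq_add] at hw₂
  simp only [hsDensity, Complex.ofReal_mul]
  set a := ‖fourierHat (fun x => (f x : ℂ)) (N * (ξ - n))‖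
  set b := ‖fourierHat (fun x => (f x : ℂ)) (N * (ξ + n))‖
  calc _ ≤ (1 + ξ ^ 2) ^ σ * (N ^ 2 / 2 * (a ^ 2 + b ^ 2)) := by gcongr; exact hsq
    _ = N ^ 2 / 2 * ((1 + ξ ^ 2) ^ σ * a ^ 2 + (1 + ξ ^ 2) ^ σ * b ^ 2) := by ring
    _ ≤ N ^ 2 / 2 * ((3 * n ^ 2) ^ σ * (1 + (N * (ξ - n)) ^ 2) ^ σ * a ^ 2 +
          (3 * n ^ 2) ^ σ * (1 + (N * (ξ + n)) ^ 2) ^ σ * b ^ 2) := by gcongr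
    _ = _ := by ring

theorem integral_hsDensity_comp_div_mul_cos_le (hf : Integrable f) (hfσ : memHs σ f)
    (hσ : 0 ≤ σ) {n N : ℝ} (hn : 1 ≤ n) (hN : 1 ≤ N) (α : ℝ) :
    ∫ ξ, hsDensity σ (fun x => f (x / N) * Real.cos (n * x - α)) ξ ≤
      (3 * n ^ 2) ^ σ * N * ∫ ξ, hsDensity σ f ξ := by
  have hN0 : 0 < N := by linarith
  have hshift : ∀ v : ℝ, Integrable fun ξ => hsDensity σ f (N * (ξ - v)) := fun v =>
    (hfσ.comp_mul_left' hN0.ne').comp_sub_right v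
  have hshift' : Integrable fun ξ => hsDensity σ f (N * (ξ + n)) := by
    simpa [sub_neg_eq_add] using hshift (-n)
  calc _ ≤ ∫ ξ, (3 * n ^ 2) ^ σ * (N ^ 2 / 2) *
        (hsDensity σ f (N * (ξ - n)) + hsDensity σ f (N * (ξ + n))) :=
        integral_mono_of_nonneg (ae_of_all _ (hsDensity_nonneg _ _))
          (((hshift n).add hshift').const_mul _)
          (ae_of_all _ (hsDensity_comp_div_mul_cos_le hf hσ hn hN α))
    _ = (3 * n ^ 2) ^ σ * N * ∫ ξ, hsDensity σ f ξ := by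
        have hadd : ∫ ξ, hsDensity σ f (N * (ξ + n)) = N⁻¹ * ∫ η, hsDensity σ f η := by
          simpa using integral_comp_mul_sub (hsDensity σ f) hN0 (-n)
        rw [integral_const_mul, integral_add (hshift n) hshift', integral_comp_mul_sub _ hN0,
          hadd]
        field_simp
        ring

theorem hsNorm_comp_div_mul_cos_le (hf : Integrable f) (hfσ : memHs σ f) (hσ : 0 ≤ σ)
    {n N : ℝ} (hn : 1 ≤ n) (hN : 1 ≤ N) (α : ℝ) :
    hsNorm σ (fun x => f (x / N) * Real.cos (n * x - α)) ≤
      Real.sqrt ((3 * n ^ 2) ^ σ * N) * hsNorm σ f := by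
  rw [hsNorm_eq_sqrt_integral, hsNorm_eq_sqrt_integral, ← Real.sqrt_mul (by positivity)]
  exact Real.sqrt_le_sqrt (integral_hsDensity_comp_div_mul_cos_le hf hfσ hσ hn hN α)

end Sobolev

theorem SchwartzMap.integrable_one_add_norm_sq_rpow_mul_norm_sq {V E : Type*}
    [NormedAddCommGroup V] [InnerProductSpace ℝ V] [FiniteDimensional ℝ V] [MeasurableSpace V]
    [BorelSpace V] [NormedAddCommGroup E] [NormedSpace ℝ E] (ψ : 𝓢(V, E)) (μ : Measure V)
    [μ.HasTemperateGrowth] (σ : ℝ) :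
    Integrable (fun x => (1 + ‖x‖ ^ 2) ^ σ * ‖ψ x‖ ^ 2) μ := by
  have hw := Function.hasTemperateGrowth_one_add_norm_sq_rpow V (σ / 2)
  have hwψ := (smulLeftCLM E (fun x : V => (1 + ‖x‖ ^ 2) ^ (σ / 2)) ψ).memLp 2 μ
  refine (hwψ.integrable_norm_pow two_ne_zero).congr (ae_of_all _ fun x => ?_)
  dsimp only
  rw [smulLeftCLM_apply_apply hw, norm_smul, mul_pow, Real.norm_eq_abs, sq_abs,
    ← Real.rpow_natCast, ← Real.rpow_mul (by positivity)]
  norm_num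

theorem SchwartzMap.memHs (φ : 𝓢(ℝ, ℝ)) (σ : ℝ) : memHs σ φ := by
  have h2π : (2 * Real.pi) ≠ 0 := by positivity
  set ψ : 𝓢(ℝ, ℂ) := compCLMOfContinuousLinearEquiv ℂ
    (LinearEquiv.smulOfNeZero ℝ ℝ _ (inv_ne_zero h2π)).toContinuousLinearEquiv
    (𝓕 (postcompCLM Complex.ofRealCLM φ))
  have hψ : ∀ ξ, hsDensity σ φ ξ = (2 * Real.pi)⁻¹ * ((1 + ‖ξ‖ ^ 2) ^ σ * ‖ψ ξ‖ ^ 2) := by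
    intro ξ
    have hψξ : ψ ξ = 𝓕 (fun x => (φ x : ℂ)) (ξ / (2 * Real.pi)) := by
      simp only [ψ, compCLMOfContinuousLinearEquiv_apply, fourier_coe, Function.comp_apply,
        LinearEquiv.coe_toContinuousLinearEquiv', LinearEquiv.smulOfNeZero_apply, smul_eq_mul,
        div_eq_inv_mul]
      rfl
    rw [hsDensity, fourierHat_eq_fourier, hψξ, norm_mul, mul_pow, norm_inv, Complex.norm_real,
      Real.norm_eq_abs, abs_of_nonneg (Real.sqrt_nonneg _), inv_pow,
      Real.sq_sqrt (by positivity), Real.norm_eq_abs, sq_abs]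
    ring
  rw [memHs_iff_integrable, funext hψ]
  exact (integrable_one_add_norm_sq_rpow_mul_norm_sq ψ volume σ).const_mul _

theorem hs_norm_bound_cos_general (φ : SchwartzMap ℝ ℝ) (s δ : ℝ) (hδ0 : 0 < δ) :
    ∀ σ : ℝ, 0 ≤ σ → ∃ C : ℝ, 0 < C ∧
      ∀ n : ℕ, 1 ≤ n → ∀ α : ℝ,
        hsNorm σ (fun x =>
            (n : ℝ) ^ (-(δ/2) - s) * φ (x / (n : ℝ) ^ δ) * Real.cos ((n : ℝ) * x - α)) ≤
          C * (n : ℝ) ^ (σ - s) := by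
  intro σ hσ
  have hφ0 : 0 ≤ hsNorm σ φ := by rw [hsNorm_eq_sqrt_integral]; positivity
  refine ⟨3 ^ (σ / 2) * hsNorm σ φ + 1, by positivity, fun n hn α => ?_⟩
  have hn1 : (1 : ℝ) ≤ n := by exact_mod_cast hn
  have hn0 : (0 : ℝ) < n := by linarith
  have hscale : (n : ℝ) ^ (-(δ / 2) - s) * Real.sqrt ((3 * (n : ℝ) ^ 2) ^ σ * (n : ℝ) ^ δ) =
      3 ^ (σ / 2) * (n : ℝ) ^ (σ - s) := by
    rw [← Real.rpow_two, Real.mul_rpow (by norm_num) (by positivity), ← Real.rpow_mul hn0.le,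
      mul_assoc, ← Real.rpow_add hn0, Real.sqrt_mul (by positivity), Real.sqrt_eq_rpow,
      Real.sqrt_eq_rpow, ← Real.rpow_mul (by norm_num), ← Real.rpow_mul hn0.le, mul_left_comm,
      ← Real.rpow_add hn0]
    ring_nf
  calc _ = (n : ℝ) ^ (-(δ / 2) - s) *
        hsNorm σ (fun x => φ (x / (n : ℝ) ^ δ) * Real.cos ((n : ℝ) * x - α)) := by
        simp_rw [mul_assoc]
        rw [hsNorm_const_mul, abs_of_pos (Real.rpow_pos_of_pos hn0 _)]
    _ ≤ (n : ℝ) ^ (-(δ / 2) - s) *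
        (Real.sqrt ((3 * (n : ℝ) ^ 2) ^ σ * (n : ℝ) ^ δ) * hsNorm σ φ) := by
        gcongr
        exact hsNorm_comp_div_mul_cos_le φ.integrable (φ.memHs σ) hσ hn1
          (Real.one_le_rpow hn1 hδ0.le) α
    _ = 3 ^ (σ / 2) * hsNorm σ φ * (n : ℝ) ^ (σ - s) := by rw [← mul_assoc, hscale]; ring
    _ ≤ _ := by gcongr; linarith

/-- for a Schwartz function `φ`, `s ∈ ℝ` and `0 < δ < 1`, for every `σ ≥ 0`
there is `C = C(φ, σ, s, δ) > 0` such that for all integers `n ≥ 1` and all `α ∈ ℝ`,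
`‖n^{-δ/2-s} φ(x/n^δ) cos(nx - α)‖_{H^σ} ≤ C n^{σ-s}`. -/
theorem hs_norm_bound_cos (φ : SchwartzMap ℝ ℝ) (s δ : ℝ) (hδ0 : 0 < δ) (hδ1 : δ < 1) :
    ∀ σ : ℝ, 0 ≤ σ → ∃ C : ℝ, 0 < C ∧
      ∀ n : ℕ, 1 ≤ n → ∀ α : ℝ,
        hsNorm σ (fun x =>
            (n : ℝ) ^ (-(δ/2) - s) * φ (x / (n : ℝ) ^ δ) * Real.cos ((n : ℝ) * x - α)) ≤
          C * (n : ℝ) ^ (σ - s) :=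
  hs_norm_bound_cos_general φ s δ hδ0
end

section
/- Let f : ℝ → ℝ be a Schwartz function and define g(x) = (1/2) ∫_ℝ e^{−|x−y|} f(y) dy. Then g is twice continuously differentiable and satisfies g(x) − g''(x) = f(x) for every x ∈ ℝ; that is, convolution with the kernel p(x) = (1/2)e^{−|x|} inverts the operator 1 − ∂_x². -/
/-!
Splitting the kernel at `y = x` writes `g = (L + R) / 2` with
`L x = ∫_{y ≤ x} e^{y - x} f y` and `R x = ∫_{y > x} e^{x - y} f y`. These one-sided
convolutions solve the first-order equations `L' = f - L` and `R' = R - f` (the factorisation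
`1 - ∂² = (1 + ∂)(1 - ∂)`), so `g' = (R - L) / 2` and `g'' = (L + R) / 2 - f = g - f`.
-/

open MeasureTheory Set Real

section OneSided

variable {E : Type*} [NormedAddCommGroup E] [NormedSpace ℝ E] [CompleteSpace E] {h : ℝ → E}

theorem hasDerivAt_integral_Iic (hc : Continuous h) (hi : ∀ x, IntegrableOn h (Iic x)) (x : ℝ) :
    HasDerivAt (fun u => ∫ y in Iic u, h y) (h x) x := by
  have hsplit :
      (fun u => ∫ y in Iic u, h y) = fun u => (∫ y in Iic 0, h y) + ∫ y in 0..u, h y := by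
    funext u
    rw [← intervalIntegral.integral_Iic_sub_Iic (hi 0) (hi u), add_sub_cancel]
  rw [hsplit]
  exact (intervalIntegral.integral_hasDerivAt_right (hc.intervalIntegrable 0 x)
    hc.aestronglyMeasurable.stronglyMeasurableAtFilter hc.continuousAt).const_add _

theorem hasDerivAt_integral_Ioi (hc : Continuous h) (hi : ∀ x, IntegrableOn h (Ioi x)) (x : ℝ) :
    HasDerivAt (fun u => ∫ y in Ioi u, h y) (-h x) x := by
  have hsplit :
      (fun u => ∫ y in Ioi u, h y) = fun u => (∫ y in Ioi 0, h y) - ∫ y in 0..u, h y := by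
    funext u
    rw [← intervalIntegral.integral_Ioi_sub_Ioi' (hi 0) (hi u), sub_sub_cancel]
  rw [hsplit]
  exact (intervalIntegral.integral_hasDerivAt_right (hc.intervalIntegrable 0 x)
    hc.aestronglyMeasurable.stronglyMeasurableAtFilter hc.continuousAt).const_sub _

end OneSided

section ExpConv

variable {E : Type*} [NormedAddCommGroup E] [NormedSpace ℝ E] {f : ℝ → E}

theorem integrableOn_exp_smul_Iic (hf : Integrable f) (x : ℝ) :
    IntegrableOn (fun y => exp y • f y) (Iic x) := by
  refine hf.restrict.bdd_smul (exp x) (by fun_prop) ?_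
  filter_upwards [self_mem_ae_restrict measurableSet_Iic] with y hy
  simpa using hy

theorem integrableOn_exp_neg_smul_Ioi (hf : Integrable f) (x : ℝ) :
    IntegrableOn (fun y => exp (-y) • f y) (Ioi x) := by
  refine hf.restrict.bdd_smul (exp (-x)) (by fun_prop) ?_
  filter_upwards [self_mem_ae_restrict measurableSet_Ioi] with y hy
  simp [(mem_Ioi.1 hy).le]

theorem integrable_exp_neg_abs_sub_smul (hf : Integrable f) (x : ℝ) :
    Integrable (fun y => exp (-|x - y|) • f y) :=
  hf.bdd_smul 1 (by fun_prop) (.of_forall fun y => by simp)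

noncomputable def expConvIic (f : ℝ → E) (x : ℝ) : E := ∫ y in Iic x, exp (y - x) • f y

noncomputable def expConvIoi (f : ℝ → E) (x : ℝ) : E := ∫ y in Ioi x, exp (x - y) • f y

theorem expConvIic_eq (f : ℝ → E) (x : ℝ) :
    expConvIic f x = exp (-x) • ∫ y in Iic x, exp y • f y := by
  simp only [expConvIic, ← integral_smul, smul_smul, ← exp_add, neg_add_eq_sub]

theorem expConvIoi_eq (f : ℝ → E) (x : ℝ) :
    expConvIoi f x = exp x • ∫ y in Ioi x, exp (-y) • f y := by
  simp only [expConvIoi, ← integral_smul, smul_smul, ← exp_add, sub_eq_add_neg]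

theorem integral_exp_neg_abs_sub_smul (hf : Integrable f) (x : ℝ) :
    ∫ y, exp (-|x - y|) • f y = expConvIic f x + expConvIoi f x := by
  have hIic : EqOn (fun y => exp (-|x - y|) • f y) (fun y => exp (y - x) • f y) (Iic x) := by
    intro y hy
    simp only [abs_of_nonneg (sub_nonneg.2 (mem_Iic.1 hy)), neg_sub]
  have hIoi : EqOn (fun y => exp (-|x - y|) • f y) (fun y => exp (x - y) • f y) (Ioi x) := by
    intro y hy
    simp only [abs_of_neg (sub_neg.2 (mem_Ioi.1 hy)), neg_neg]
  have hint := integrable_exp_neg_abs_sub_smul hf x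
  rw [← intervalIntegral.integral_Iic_add_Ioi hint.integrableOn hint.integrableOn,
    setIntegral_congr_fun measurableSet_Iic hIic, setIntegral_congr_fun measurableSet_Ioi hIoi,
    expConvIic, expConvIoi]

variable [CompleteSpace E]

theorem hasDerivAt_expConvIic (hf : Integrable f) (hc : Continuous f) (x : ℝ) :
    HasDerivAt (expConvIic f) (f x - expConvIic f x) x := by
  have hA := hasDerivAt_integral_Iic (by fun_prop) (integrableOn_exp_smul_Iic hf) x
  convert ((hasDerivAt_neg x).exp).smul hA using 1
  · exact funext (expConvIic_eq f)
  · rw [expConvIic_eq, smul_smul, ← exp_add, neg_add_cancel, exp_zero, one_smul]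
    module

theorem hasDerivAt_expConvIoi (hf : Integrable f) (hc : Continuous f) (x : ℝ) :
    HasDerivAt (expConvIoi f) (expConvIoi f x - f x) x := by
  have hB := hasDerivAt_integral_Ioi (by fun_prop) (integrableOn_exp_neg_smul_Ioi hf) x
  convert (hasDerivAt_exp x).smul hB using 1
  · exact funext (expConvIoi_eq f)
  · rw [expConvIoi_eq, smul_neg, smul_smul, ← exp_add, add_neg_cancel, exp_zero, one_smul]
    module

end ExpConv

theorem contDiff_two_of_hasDerivAt {𝕜 F : Type*} [NontriviallyNormedField 𝕜]
    [NormedAddCommGroup F] [NormedSpace 𝕜 F] {u u' u'' : 𝕜 → F}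
    (hu : ∀ x, HasDerivAt u (u' x) x) (hu' : ∀ x, HasDerivAt u' (u'' x) x)
    (hc : Continuous u'') : ContDiff 𝕜 2 u := by
  have hd : deriv u = u' := funext fun x => (hu x).deriv
  have hd' : deriv u' = u'' := funext fun x => (hu' x).deriv
  rw [show (2 : WithTop ℕ∞) = 1 + 1 from rfl, contDiff_succ_iff_deriv, hd, contDiff_one_iff_deriv,
    hd']
  exact ⟨fun x => (hu x).differentiableAt, by simp, fun x => (hu' x).differentiableAt, hc⟩

/-- for a Schwartz function `f`, the function
`g(x) = (1/2) ∫ e^{-|x-y|} f(y) dy` is twice continuously differentiable and satisfies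
`g - g'' = f`; i.e. convolution with `p(x) = (1/2) e^{-|x|}` inverts `1 - ∂_x²`. -/
theorem convolution_inverts_one_sub_dxx (f : SchwartzMap ℝ ℝ) (g : ℝ → ℝ)
    (hg : ∀ x : ℝ, g x = (1/2) * ∫ y : ℝ, Real.exp (-|x - y|) * f y) :
    ContDiff ℝ 2 g ∧ ∀ x : ℝ, g x - deriv (deriv g) x = f x := by
  have hfi : Integrable f := f.integrable
  have hfc := f.continuous
  have hg_eq : g = fun x => (expConvIic f x + expConvIoi f x) / 2 := by
    funext x
    rw [hg x, ← integral_exp_neg_abs_sub_smul hfi]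
    simp only [smul_eq_mul]
    ring
  set g' := fun x => (expConvIoi f x - expConvIic f x) / 2
  have hg' : ∀ x, HasDerivAt g (g' x) x := fun x => by
    rw [hg_eq]
    refine (((hasDerivAt_expConvIic hfi hfc x).add
      (hasDerivAt_expConvIoi hfi hfc x)).div_const 2).congr_deriv ?_
    ring
  have hg'' : ∀ x, HasDerivAt g' (g x - f x) x := fun x => by
    rw [hg_eq]
    refine (((hasDerivAt_expConvIoi hfi hfc x).sub
      (hasDerivAt_expConvIic hfi hfc x)).div_const 2).congr_deriv ?_
    ring
  have hdd : deriv (deriv g) = fun x => g x - f x := by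
    rw [funext fun x => (hg' x).deriv]
    exact funext fun x => (hg'' x).deriv
  refine ⟨contDiff_two_of_hasDerivAt hg' hg'' ?_, fun x => by rw [hdd]; ring⟩
  exact (Differentiable.continuous fun x => (hg' x).differentiableAt).sub hfc
end
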